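/- arXiv:2209.14637 — 3 statements merged into one kernel-verified Lean document; each statement's English description precedes it below -/
import Mathlib

section
/- Let A ∈ ℝ^{m×n} with r ≤ min(m,n). For any rank-r matrix M ∈ ℝ^{m×n}, ‖A − M‖_F² ≥ ∑_{i>r} σ_i(A)², where σ_i(A) are the singular values of A in decreasing order (Eckart–Young theorem in Frobenius norm). -/
open Matrix BigOperators Finset
open scoped RealInnerProductSpace

/-- Squared Frobenius norm of a real matrix. -/
noncomputable def frobSq {m n : ℕ} (A : Matrix (Fin m) (Fin n) ℝ) : ℝ :=
  ∑ i, ∑ j, (A i j) ^ 2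

/-- Squares of the singular values of `A`, in decreasing order, indexed by `ℕ`
(equal to `0` beyond the number of columns): the eigenvalues of `Aᵀ * A` sorted
decreasingly. -/
noncomputable def sValSq {m n : ℕ} (A : Matrix (Fin m) (Fin n) ℝ) : ℕ → ℝ :=
  fun i =>
    if h : i < n then
      (Matrix.isHermitian_conjTranspose_mul_self A).eigenvalues
        ((Tuple.sort (fun j => -(Matrix.isHermitian_conjTranspose_mul_self A).eigenvalues j)) ⟨i, h⟩)
    else 0

/-- The `i`-th largest singular value (0-indexed) of a real matrix. -/
noncomputable def sVal {m n : ℕ} (A : Matrix (Fin m) (Fin n) ℝ) : ℕ → ℝ :=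
  fun i => Real.sqrt (sValSq A i)

noncomputable def toE {n : ℕ} (x : Fin n → ℝ) : EuclideanSpace ℝ (Fin n) :=
  (WithLp.equiv 2 (Fin n → ℝ)).symm x

lemma inner_eq_dot {n : ℕ} (x y : EuclideanSpace ℝ (Fin n)) :
    ⟪x, y⟫ = dotProduct (WithLp.equiv 2 (Fin n → ℝ) x) (WithLp.equiv 2 (Fin n → ℝ) y) := by
  simp [PiLp.inner_apply, dotProduct, mul_comm]

lemma parseval {n : ℕ} (b : OrthonormalBasis (Fin n) ℝ (EuclideanSpace ℝ (Fin n)))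
    (x : EuclideanSpace ℝ (Fin n)) : ∑ j, (⟪x, b j⟫ : ℝ) ^ 2 = ‖x‖ ^ 2 := by
  have h := b.sum_inner_mul_inner x x
  rw [real_inner_self_eq_norm_sq] at h
  rw [← h]
  refine Finset.sum_congr rfl fun j _ => ?_
  rw [sq, real_inner_comm x (b j)]

lemma frobSq_eq_sum_basis {m n : ℕ} (B : Matrix (Fin m) (Fin n) ℝ)
    (b : OrthonormalBasis (Fin n) ℝ (EuclideanSpace ℝ (Fin n))) :
    frobSq B = ∑ j, ∑ i, (B.mulVec (b j) i) ^ 2 := by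
  rw [frobSq, Finset.sum_comm (γ := Fin n)]
  refine Finset.sum_congr rfl fun i _ => ?_
  have hx : ∀ j : Fin n, B.mulVec (b j) i = ⟪toE (fun j' => B i j'), b j⟫ := by
    intro j
    rw [inner_eq_dot]
    rfl
  calc ∑ j, B i j ^ 2 = ‖toE (fun j' => B i j')‖ ^ 2 := by
        rw [← real_inner_self_eq_norm_sq, inner_eq_dot]
        simp [toE, dotProduct, sq]
    _ = ∑ j, (B.mulVec (b j) i) ^ 2 := by
        rw [← parseval b]
        exact Finset.sum_congr rfl fun j _ => by rw [hx j]

lemma qform {m n : ℕ} (A : Matrix (Fin m) (Fin n) ℝ) (v : EuclideanSpace ℝ (Fin n)) :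
    ∑ i, (A.mulVec v i) ^ 2 =
      ∑ k, (Matrix.isHermitian_conjTranspose_mul_self A).eigenvalues k *
        (⟪(Matrix.isHermitian_conjTranspose_mul_self A).eigenvectorBasis k, v⟫ : ℝ) ^ 2 := by
  classical
  set hA := Matrix.isHermitian_conjTranspose_mul_self A with hAdef
  set u := hA.eigenvectorBasis with hu
  set lam := hA.eigenvalues with hlam
  set c : Fin n → ℝ := fun k => ⟪u k, v⟫ with hc
  have hv : (∑ k, c k • u k) = v := by
    have := u.sum_repr v
    simp only [OrthonormalBasis.repr_apply_apply] at this
    exact this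
  have hH : ∀ k, (Aᴴ * A) *ᵥ (u k : Fin n → ℝ) = lam k • (u k : Fin n → ℝ) :=
    fun k => hA.mulVec_eigenvectorBasis k
  have step1 : ∑ i, (A.mulVec v i) ^ 2 = ((Aᴴ * A) *ᵥ (v : Fin n → ℝ)) ⬝ᵥ (v : Fin n → ℝ) := by
    have h1 : ∑ i, (A.mulVec v i) ^ 2 = (A *ᵥ (v : Fin n → ℝ)) ⬝ᵥ (A *ᵥ (v : Fin n → ℝ)) := by
      simp [dotProduct, sq]
    rw [h1, Matrix.dotProduct_mulVec, ← Matrix.mulVec_transpose,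
      ← Matrix.conjTranspose_eq_transpose_of_trivial, Matrix.mulVec_mulVec]
  have sum_dot : ∀ (f : Fin n → Fin n → ℝ) (w : Fin n → ℝ),
      (∑ k, f k) ⬝ᵥ w = ∑ k, f k ⬝ᵥ w := by
    intro f w
    simp only [dotProduct, Finset.sum_apply, Finset.sum_mul]
    exact Finset.sum_comm
  have hHv : (Aᴴ * A) *ᵥ (v : Fin n → ℝ) = ∑ k, (lam k * c k) • (u k : Fin n → ℝ) := by
    conv_lhs => rw [← hv]
    have hcoe : ((∑ k, c k • u k : EuclideanSpace ℝ (Fin n)) : Fin n → ℝ)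
        = ∑ k, c k • (u k : Fin n → ℝ) := by simp
    rw [hcoe, ← Matrix.mulVecLin_apply, map_sum]
    refine Finset.sum_congr rfl fun k _ => ?_
    rw [_root_.map_smul, Matrix.mulVecLin_apply, hH k, smul_smul, mul_comm]
  have step2 : ((Aᴴ * A) *ᵥ (v : Fin n → ℝ)) ⬝ᵥ (v : Fin n → ℝ)
      = ∑ k, lam k * c k ^ 2 := by
    rw [hHv, sum_dot]
    refine Finset.sum_congr rfl fun k _ => ?_
    rw [smul_dotProduct]
    have : (u k : Fin n → ℝ) ⬝ᵥ (v : Fin n → ℝ) = c k := (inner_eq_dot (u k) v).symm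
    rw [this, smul_eq_mul]
    ring
  rw [step1, step2]

lemma card_filter_lt {n d : ℕ} (h : d ≤ n) :
    (Finset.univ.filter (fun i : Fin n => (i : ℕ) < d)).card = d := by
  classical
  have himg : (Finset.univ.filter (fun i : Fin n => (i : ℕ) < d)).image (Fin.val) =
      Finset.range d := by
    ext x
    simp only [Finset.mem_image, Finset.mem_filter, Finset.mem_univ, true_and, Finset.mem_range]
    constructor
    · rintro ⟨i, hi, rfl⟩; exact hi
    · intro hx; exact ⟨⟨x, lt_of_lt_of_le hx h⟩, hx, rfl⟩
  have := Finset.card_image_of_injective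
    (Finset.univ.filter (fun i : Fin n => (i : ℕ) < d)) (Fin.val_injective)
  rw [himg, Finset.card_range] at this
  omega

lemma card_filter_le {n r : ℕ} (h : r ≤ n) :
    (Finset.univ.filter (fun i : Fin n => r ≤ (i : ℕ))).card = n - r := by
  classical
  have h1 := card_filter_lt (n := n) (d := r) h
  have h2 : (Finset.univ.filter (fun i : Fin n => r ≤ (i : ℕ)))
      = (Finset.univ.filter (fun i : Fin n => (i : ℕ) < r))ᶜ := by
    ext i; simp [not_lt]
  rw [h2, Finset.card_compl, h1]
  simp

lemma threshold {n r : ℕ} (σ : Equiv.Perm (Fin n)) (lam : Fin n → ℝ)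
    (hpos : ∀ k, 0 ≤ lam k) (anti : ∀ i j : Fin n, i ≤ j → lam (σ j) ≤ lam (σ i))
    (c : Fin n → ℝ) (hc0 : ∀ k, 0 ≤ c k) (hc1 : ∀ k, c k ≤ 1)
    (hsum : (n : ℝ) - r ≤ ∑ k, c k) :
    ∑ i ∈ Finset.univ.filter (fun i : Fin n => r ≤ (i : ℕ)), lam (σ i) ≤ ∑ k, lam k * c k := by
  classical
  rcases le_or_gt n r with h | h
  · have hempty : Finset.univ.filter (fun i : Fin n => r ≤ (i : ℕ)) = ∅ := by
      ext i
      simp only [Finset.mem_filter, Finset.mem_univ, true_and, Finset.notMem_empty, iff_false,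
        not_le]
      exact lt_of_lt_of_le i.isLt h
    rw [hempty, Finset.sum_empty]
    exact Finset.sum_nonneg fun k _ => mul_nonneg (hpos k) (hc0 k)
  · set t := lam (σ ⟨r, h⟩) with ht
    set S := Finset.univ.filter (fun i : Fin n => r ≤ (i : ℕ)) with hS
    set T := S.image σ with hT
    have hmemT : ∀ k : Fin n, k ∈ T ↔ r ≤ ((σ.symm k : Fin n) : ℕ) := by
      intro k
      simp only [hT, Finset.mem_image, hS, Finset.mem_filter, Finset.mem_univ, true_and]
      constructor
      · rintro ⟨i, hi, rfl⟩; simpa using hi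
      · intro hk; exact ⟨σ.symm k, hk, by simp⟩
    have hsumT : ∑ i ∈ S, lam (σ i) = ∑ k ∈ T, lam k :=
      (Finset.sum_image (fun a _ b _ hab => σ.injective hab)).symm
    have hcardT : (T.card : ℝ) = (n : ℝ) - r := by
      rw [hT, Finset.card_image_of_injective _ σ.injective, hS, card_filter_le h.le]
      push_cast [Nat.cast_sub h.le]
      ring
    have hT_le : ∀ k ∈ T, lam k ≤ t := by
      intro k hk
      have h1 : (⟨r, h⟩ : Fin n) ≤ σ.symm k := by
        rw [Fin.le_def]; exact (hmemT k).1 hk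
      have := anti _ _ h1
      simpa using this
    have hT_ge : ∀ k ∉ T, t ≤ lam k := by
      intro k hk
      have h2 : ¬ r ≤ ((σ.symm k : Fin n) : ℕ) := (hmemT k).not.1 hk
      have h1 : σ.symm k ≤ (⟨r, h⟩ : Fin n) := by
        rw [Fin.le_def]
        show ((σ.symm k : Fin n) : ℕ) ≤ r
        omega
      have := anti _ _ h1
      simpa using this
    have ht0 : 0 ≤ t := hpos _
    have key : ∑ k ∈ T, lam k * (1 - c k) ≤ ∑ k ∈ Tᶜ, lam k * c k := by
      calc ∑ k ∈ T, lam k * (1 - c k) ≤ ∑ k ∈ T, t * (1 - c k) := by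
            refine Finset.sum_le_sum fun k hk => ?_
            exact mul_le_mul_of_nonneg_right (hT_le k hk) (by linarith [hc1 k])
        _ = t * ((T.card : ℝ) - ∑ k ∈ T, c k) := by
            rw [← Finset.mul_sum, Finset.sum_sub_distrib, Finset.sum_const, nsmul_eq_mul,
              mul_one]
        _ ≤ t * (∑ k ∈ Tᶜ, c k) := by
            refine mul_le_mul_of_nonneg_left ?_ ht0
            have hsplit : ∑ k ∈ T, c k + ∑ k ∈ Tᶜ, c k = ∑ k, c k :=
              Finset.sum_add_sum_compl T c
            rw [hcardT]
            linarith
        _ ≤ ∑ k ∈ Tᶜ, lam k * c k := by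
            rw [Finset.mul_sum]
            refine Finset.sum_le_sum fun k hk => ?_
            have hk' : k ∉ T := by simpa using hk
            exact mul_le_mul_of_nonneg_right (hT_ge k hk') (hc0 k)
    have hsplit : ∑ k, lam k * c k = ∑ k ∈ T, lam k * c k + ∑ k ∈ Tᶜ, lam k * c k :=
      (Finset.sum_add_sum_compl T _).symm
    have hTid : ∑ k ∈ T, lam k = ∑ k ∈ T, lam k * c k + ∑ k ∈ T, lam k * (1 - c k) := by
      rw [← Finset.sum_add_distrib]
      refine Finset.sum_congr rfl fun k _ => by ring
    rw [hsumT, hsplit, hTid]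
    linarith

lemma exists_ker_basis {m n : ℕ} (M : Matrix (Fin m) (Fin n) ℝ) :
    ∃ (d : ℕ) (b : OrthonormalBasis (Fin n) ℝ (EuclideanSpace ℝ (Fin n))),
      d + M.rank = n ∧ ∀ i : Fin n, (i : ℕ) < d → M.mulVec (b i : Fin n → ℝ) = 0 := by
  classical
  set φ : EuclideanSpace ℝ (Fin n) →ₗ[ℝ] (Fin m → ℝ) :=
    M.mulVecLin ∘ₗ (WithLp.linearEquiv 2 ℝ (Fin n → ℝ)).toLinearMap with hφ
  set K := LinearMap.ker φ with hK
  have hrange : LinearMap.range φ = LinearMap.range M.mulVecLin := by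
    rw [hφ, LinearMap.range_comp, LinearEquiv.range, Submodule.map_top]
  have hrn : Module.finrank ℝ K + M.rank = n := by
    have h1 := LinearMap.finrank_range_add_finrank_ker φ
    rw [hrange] at h1
    rw [hK, Matrix.rank]
    have h2 : Module.finrank ℝ (EuclideanSpace ℝ (Fin n)) = n := by
      simp [finrank_euclideanSpace]
    omega
  set d := Module.finrank ℝ K with hd
  have hdn : d ≤ n := Nat.le.intro hrn
  set b0 := stdOrthonormalBasis ℝ K with hb0
  set v : Fin n → EuclideanSpace ℝ (Fin n) :=
    fun i => if h : (i : ℕ) < d then ((b0 ⟨i, h⟩ : K) : EuclideanSpace ℝ (Fin n)) else 0 with hv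
  have hortho : Orthonormal ℝ (({i : Fin n | (i : ℕ) < d}).restrict v) := by
    rw [orthonormal_iff_ite]
    rintro ⟨i, hi⟩ ⟨j, hj⟩
    have hi' : (i : ℕ) < d := hi
    have hj' : (j : ℕ) < d := hj
    simp only [Set.restrict_apply, Set.restrict, hv, dif_pos hi', dif_pos hj']
    rw [← Submodule.coe_inner]
    rw [orthonormal_iff_ite.1 b0.orthonormal ⟨i, hi'⟩ ⟨j, hj'⟩]
    congr 1
    simp [Fin.ext_iff, Subtype.ext_iff]
  obtain ⟨b, hb⟩ := hortho.exists_orthonormalBasis_extension_of_card_eq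
    (by simp [finrank_euclideanSpace])
  refine ⟨d, b, hrn, ?_⟩
  intro i hi
  rw [hb i hi]
  simp only [hv, dif_pos hi]
  have hmem : ((b0 ⟨i, hi⟩ : K) : EuclideanSpace ℝ (Fin n)) ∈ K := (b0 ⟨i, hi⟩).2
  exact LinearMap.mem_ker.1 hmem

theorem stmt_6 {m n : ℕ} (A : Matrix (Fin m) (Fin n) ℝ)
    (r : ℕ) (hr : r ≤ min m n)
    (M : Matrix (Fin m) (Fin n) ℝ) (hM : M.rank ≤ r) :
    ∑ i ∈ Finset.Ico r n, (sVal A i) ^ 2 ≤ frobSq (A - M) := by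
  classical
  have hrn : r ≤ n := le_trans hr (min_le_right m n)
  set hA := Matrix.isHermitian_conjTranspose_mul_self A with hAdef
  set lam := hA.eigenvalues with hlam
  set u := hA.eigenvectorBasis with hu
  set σ := Tuple.sort (fun j => -(lam j)) with hσ
  have hpos : ∀ k, 0 ≤ lam k := fun k =>
    (Matrix.posSemidef_conjTranspose_mul_self A).eigenvalues_nonneg k
  have anti : ∀ i j : Fin n, i ≤ j → lam (σ j) ≤ lam (σ i) := by
    intro i j hij
    have h1 := Tuple.monotone_sort (fun j => -(lam j)) hij
    simp only [Function.comp_apply] at h1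
    rw [hσ]
    linarith
  obtain ⟨d, b, hdrank, hker⟩ := exists_ker_basis M
  have hdn : d ≤ n := Nat.le.intro hdrank
  set Sd := Finset.univ.filter (fun j : Fin n => (j : ℕ) < d) with hSd
  set c : Fin n → ℝ := fun k => ∑ j ∈ Sd, (⟪u k, b j⟫ : ℝ) ^ 2 with hc
  have hc0 : ∀ k, 0 ≤ c k := fun k => Finset.sum_nonneg fun j _ => sq_nonneg _
  have hc1 : ∀ k, c k ≤ 1 := by
    intro k
    have h1 : c k ≤ ∑ j, (⟪u k, b j⟫ : ℝ) ^ 2 :=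
      Finset.sum_le_sum_of_subset_of_nonneg (Finset.subset_univ Sd) fun j _ _ => sq_nonneg _
    rw [parseval b (u k)] at h1
    have h2 : ‖u k‖ = 1 := u.orthonormal.1 k
    rw [h2] at h1
    simpa using h1
  have hcsum : ∑ k, c k = (d : ℝ) := by
    rw [hc]
    rw [Finset.sum_comm]
    have h3 : ∀ j ∈ Sd, ∑ k, (⟪u k, b j⟫ : ℝ) ^ 2 = 1 := by
      intro j _
      have h4 : ∑ k, (⟪b j, u k⟫ : ℝ) ^ 2 = ‖b j‖ ^ 2 := parseval u (b j)
      have h5 : ∑ k, (⟪u k, b j⟫ : ℝ) ^ 2 = ∑ k, (⟪b j, u k⟫ : ℝ) ^ 2 :=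
        Finset.sum_congr rfl fun k _ => by rw [real_inner_comm]
      rw [h5, h4, b.orthonormal.1 j]
      norm_num
    rw [Finset.sum_congr rfl h3, Finset.sum_const, card_filter_lt hdn]
    simp
  have hsum : (n : ℝ) - r ≤ ∑ k, c k := by
    rw [hcsum]
    have h6 : n ≤ d + r := by omega
    have h7 : (n : ℝ) ≤ (d : ℝ) + r := by exact_mod_cast h6
    linarith
  have key := threshold σ lam hpos anti c hc0 hc1 hsum
  have hLHS : ∑ i ∈ Finset.Ico r n, (sVal A i) ^ 2
      = ∑ i ∈ Finset.univ.filter (fun i : Fin n => r ≤ (i : ℕ)), lam (σ i) := by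
    have h1 : ∀ i ∈ Finset.Ico r n, (sVal A i) ^ 2 = sValSq A i := by
      intro i hi
      have h2 : i < n := (Finset.mem_Ico.1 hi).2
      rw [sVal, Real.sq_sqrt]
      rw [sValSq, dif_pos h2]
      exact hpos _
    rw [Finset.sum_congr rfl h1]
    refine Finset.sum_bij' (fun i hi => (⟨i, (Finset.mem_Ico.1 hi).2⟩ : Fin n))
      (fun j _ => (j : ℕ)) ?_ ?_ ?_ ?_ ?_
    · intro i hi
      simp only [Finset.mem_filter, Finset.mem_univ, true_and]
      exact (Finset.mem_Ico.1 hi).1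
    · intro j hj
      simp only [Finset.mem_filter, Finset.mem_univ, true_and] at hj
      exact Finset.mem_Ico.2 ⟨hj, j.isLt⟩
    · intro i hi; rfl
    · intro j hj; rfl
    · intro i hi
      have h2 : i < n := (Finset.mem_Ico.1 hi).2
      rw [sValSq, dif_pos h2, hσ, hlam, hAdef]
  have hRHS : ∑ k, lam k * c k ≤ frobSq (A - M) := by
    rw [frobSq_eq_sum_basis (A - M) b]
    have h1 : ∑ j ∈ Sd, ∑ i, ((A - M).mulVec (b j) i) ^ 2
        ≤ ∑ j, ∑ i, ((A - M).mulVec (b j) i) ^ 2 :=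
      Finset.sum_le_sum_of_subset_of_nonneg (Finset.subset_univ _)
        fun j _ _ => Finset.sum_nonneg fun i _ => sq_nonneg _
    refine le_trans ?_ h1
    have h2 : ∀ j ∈ Sd, ∑ i, ((A - M).mulVec (b j) i) ^ 2
        = ∑ k, lam k * (⟪u k, b j⟫ : ℝ) ^ 2 := by
      intro j hj
      have hj' : (j : ℕ) < d := by simpa [hSd] using hj
      have hMv : (A - M).mulVec (b j : Fin n → ℝ) = A.mulVec (b j) := by
        rw [Matrix.sub_mulVec, hker j hj', sub_zero]
      rw [hMv, hlam, hu, hAdef]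
      exact qform A (b j)
    rw [Finset.sum_congr rfl h2, Finset.sum_comm]
    refine le_of_eq (Finset.sum_congr rfl fun k _ => ?_)
    rw [hc, Finset.mul_sum]
  rw [hLHS]
  exact le_trans key hRHS
end

section
/- Let A ∈ ℝ^{m×n}, r ≤ k, U_k ∈ ℝ^{m×k} the matrix of the top-k left singular vectors of A, and S ∈ ℝ^{k×m} with orthonormal rows satisfying ‖U_k U_kᵀ − Sᵀ S‖_F² < ε. Then (‖A‖_F² − ∑_{i=1}^r σ_i(S A)²) − (‖A‖_F² − ∑_{i=1}^r σ_i(A)²) ≤ ‖U_k U_kᵀ − Sᵀ S‖_F² · ‖A‖_F² whenever ‖U_k U_kᵀ − Sᵀ S‖_F ≥ 1, and more precisely the left-hand side is at most ‖U_k U_kᵀ − Sᵀ S‖_F · ‖A‖_F². Consequently the SCW low-rank approximation error exceeds the optimal rank-r error ‖A − [A]_r‖_F² by at most O(√ε)·‖A‖_F². -/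
open Matrix BigOperators Finset

section helpers

-- sum/dot helpers
lemma dot_sum {N : ℕ} {ι : Type*} (s : Finset ι) (v : Fin N → ℝ) (w : ι → Fin N → ℝ) :
    v ⬝ᵥ (∑ i ∈ s, w i) = ∑ i ∈ s, v ⬝ᵥ w i := by
  simp only [dotProduct, Finset.sum_apply, Finset.mul_sum]
  exact Finset.sum_comm

lemma sum_dot {N : ℕ} {ι : Type*} (s : Finset ι) (v : Fin N → ℝ) (w : ι → Fin N → ℝ) :
    (∑ i ∈ s, w i) ⬝ᵥ v = ∑ i ∈ s, w i ⬝ᵥ v := by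
  simp only [dotProduct_comm _ v, dot_sum]

lemma dot_self_nonneg {N : ℕ} (v : Fin N → ℝ) : 0 ≤ v ⬝ᵥ v :=
  Finset.sum_nonneg fun i _ => mul_self_nonneg _

/-- Generalized Bessel inequality for a pairwise-orthogonal family with norms ≤ 1. -/
lemma bessel {N : ℕ} {ι : Type*} [Fintype ι] [DecidableEq ι] (w : ι → Fin N → ℝ) (d : ι → ℝ)
    (hd : ∀ i, d i ≤ 1)
    (hw : ∀ i j, w i ⬝ᵥ w j = if i = j then d i else 0) (v : Fin N → ℝ) :
    ∑ i, (v ⬝ᵥ w i) ^ 2 ≤ v ⬝ᵥ v := by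
  set c : ι → ℝ := fun i => v ⬝ᵥ w i with hc
  have h1 : v ⬝ᵥ (∑ i, c i • w i) = ∑ i, c i ^ 2 := by
    rw [dot_sum]
    refine Finset.sum_congr rfl fun i _ => ?_
    rw [dotProduct_smul, smul_eq_mul, sq]
  have h2 : (∑ i, c i • w i) ⬝ᵥ v = ∑ i, c i ^ 2 := by
    rw [sum_dot]
    refine Finset.sum_congr rfl fun i _ => ?_
    rw [smul_dotProduct, smul_eq_mul, dotProduct_comm, sq]
  have h3 : (∑ i, c i • w i) ⬝ᵥ (∑ j, c j • w j) = ∑ i, c i ^ 2 * d i := by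
    rw [sum_dot]
    refine Finset.sum_congr rfl fun i _ => ?_
    rw [smul_dotProduct, dot_sum]
    simp only [dotProduct_smul, hw, smul_eq_mul, mul_ite, mul_zero, Finset.sum_ite_eq,
      Finset.mem_univ, if_true]
    ring
  have h0 : 0 ≤ (v - ∑ i, c i • w i) ⬝ᵥ (v - ∑ i, c i • w i) := dot_self_nonneg _
  rw [dotProduct_sub, sub_dotProduct, sub_dotProduct, h1, h2, h3] at h0
  have h4 : ∑ i, c i ^ 2 * d i ≤ ∑ i, c i ^ 2 :=
    Finset.sum_le_sum fun i _ => by nlinarith [sq_nonneg (c i), hd i]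
  linarith


lemma sum_filter_lt {N r : ℕ} (h : r ≤ N) (g : Fin N → ℝ) :
    ∑ j ∈ Finset.univ.filter (fun j : Fin N => (j : ℕ) < r), g j
      = ∑ i : Fin r, g (Fin.castLE h i) := by
  refine Finset.sum_bij' (i := fun (j : Fin N) (hj : j ∈ Finset.univ.filter (fun j : Fin N => (j : ℕ) < r)) =>
      (⟨(j : ℕ), by simpa using hj⟩ : Fin r))
    (j := fun i _ => Fin.castLE h i) ?_ ?_ ?_ ?_ ?_
  · intro a _; exact Finset.mem_univ _
  · intro a _; simp
  · intro a _; ext; simp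
  · intro a _; ext; simp
  · intro a _; rfl

lemma comb {N r : ℕ} (hrN : r ≤ N) (ν c : Fin N → ℝ) (hanti : Antitone ν)
    (hν0 : ∀ j, 0 ≤ ν j) (hc0 : ∀ j, 0 ≤ c j) (hc1 : ∀ j, c j ≤ 1)
    (hsum : ∑ j, c j ≤ (r : ℝ)) :
    ∑ j, ν j * c j ≤ ∑ i : Fin r, ν (Fin.castLE hrN i) := by
  rcases Nat.eq_zero_or_pos r with hr0 | hr0
  · subst hr0
    simp only [Finset.univ_eq_empty, Finset.sum_empty]
    have hcz : ∀ j, c j = 0 := by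
      intro j
      have h1 : c j ≤ ∑ j', c j' := Finset.single_le_sum (fun i _ => hc0 i) (Finset.mem_univ j)
      have := hc0 j
      simp only [Nat.cast_zero] at hsum
      linarith
    simp [hcz]
  · have hrN' : r - 1 < N := lt_of_lt_of_le (Nat.sub_lt hr0 one_pos) hrN
    set θ := ν ⟨r - 1, hrN'⟩ with hθ
    have hθ0 : 0 ≤ θ := hν0 _
    set F := Finset.univ.filter (fun j : Fin N => (j : ℕ) < r) with hF
    have hFsum : ∑ i : Fin r, ν (Fin.castLE hrN i) = ∑ j ∈ F, ν j := (sum_filter_lt hrN ν).symm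
    have hFcard : ∑ j ∈ F, (1 : ℝ) = (r : ℝ) := by
      rw [hF, sum_filter_lt hrN (fun _ => (1:ℝ))]; simp
    have hFcardθ : ∑ _j ∈ F, θ = θ * (r : ℝ) := by
      rw [show (∑ _j ∈ F, θ) = θ * ∑ _j ∈ F, (1:ℝ) by rw [Finset.mul_sum]; simp, hFcard]
    have hsplitc : ∑ j ∈ F, c j + ∑ j ∈ Fᶜ, c j = ∑ j, c j := by
      rw [hF, Finset.compl_filter, Finset.sum_filter_add_sum_filter_not]
    have hsplit : ∑ j, ν j * c j = ∑ j ∈ F, ν j * c j + ∑ j ∈ Fᶜ, ν j * c j := by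
      rw [hF, Finset.compl_filter, Finset.sum_filter_add_sum_filter_not]
    -- bound on F
    have hbF : ∑ j ∈ F, ν j * c j ≤ ∑ j ∈ F, (ν j - θ * (1 - c j)) := by
      refine Finset.sum_le_sum fun j hj => ?_
      simp only [hF, Finset.mem_filter] at hj
      have hj1 : θ ≤ ν j := by
        apply hanti
        simp only [Fin.le_def]
        omega
      have := hc1 j
      nlinarith
    have hbFc : ∑ j ∈ Fᶜ, ν j * c j ≤ ∑ j ∈ Fᶜ, θ * c j := by
      refine Finset.sum_le_sum fun j hj => ?_
      simp only [hF, Finset.mem_compl, Finset.mem_filter, Finset.mem_univ, true_and,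
        not_lt] at hj
      have hj1 : ν j ≤ θ := by
        apply hanti
        simp only [Fin.le_def]
        omega
      exact mul_le_mul_of_nonneg_right hj1 (hc0 j)
    have e1 : ∑ j ∈ F, (ν j - θ * (1 - c j)) = ∑ j ∈ F, ν j - (θ * (r : ℝ) - θ * ∑ j ∈ F, c j) := by
      rw [Finset.sum_sub_distrib]
      congr 1
      simp only [mul_sub, mul_one, Finset.sum_sub_distrib, ← Finset.mul_sum, hFcardθ]
    have e2 : ∑ j ∈ Fᶜ, θ * c j = θ * ∑ j ∈ Fᶜ, c j := by rw [Finset.mul_sum]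
    have hkey : θ * ∑ j ∈ Fᶜ, c j ≤ θ * (r : ℝ) - θ * ∑ j ∈ F, c j := by
      have h9 : (0:ℝ) ≤ (r : ℝ) - ∑ j ∈ F, c j - ∑ j ∈ Fᶜ, c j := by linarith [hsplitc, hsum]
      nlinarith [mul_nonneg hθ0 h9]
    rw [hFsum]
    linarith

lemma sValSq_nonneg {m n : ℕ} (A : Matrix (Fin m) (Fin n) ℝ) (i : ℕ) : 0 ≤ sValSq A i := by
  unfold sValSq
  split
  · exact Matrix.eigenvalues_conjTranspose_mul_self_nonneg A _
  · exact le_refl _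

section quad
variable {K N : ℕ} (X : Matrix (Fin K) (Fin N) ℝ)

lemma quadform (u : Fin N → ℝ) :
    u ⬝ᵥ ((Xᴴ * X) *ᵥ u) =
      ∑ j, (Matrix.isHermitian_conjTranspose_mul_self X).eigenvalues j *
        ((fun x => ((Matrix.isHermitian_conjTranspose_mul_self X).eigenvectorUnitary : Matrix (Fin N) (Fin N) ℝ) x j) ⬝ᵥ u) ^ 2 := by
  set hC := Matrix.isHermitian_conjTranspose_mul_self X
  set V : Matrix (Fin N) (Fin N) ℝ := (hC.eigenvectorUnitary : Matrix (Fin N) (Fin N) ℝ) with hV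
  have hspec : Xᴴ * X = V * Matrix.diagonal hC.eigenvalues * Vᴴ := by
    have := hC.spectral_theorem
    rw [hV]; simpa [Matrix.star_eq_conjTranspose] using this
  conv_lhs => rw [hspec, ← Matrix.mulVec_mulVec, ← Matrix.mulVec_mulVec,
    Matrix.dotProduct_mulVec u V]
  have hg : Vᴴ *ᵥ u = u ᵥ* V := by
    ext j
    simp [Matrix.mulVec, Matrix.vecMul, Matrix.conjTranspose_apply, dotProduct, mul_comm]
  rw [hg]
  simp only [dotProduct, Matrix.mulVec_diagonal]
  refine Finset.sum_congr rfl fun j _ => ?_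
  simp only [Matrix.vecMul, dotProduct]
  rw [show (∑ x, u x * V x j) = ∑ x, V x j * u x from Finset.sum_congr rfl fun x _ => mul_comm _ _]
  ring


lemma parseval_s11 (u : Fin N → ℝ) :
    ∑ j, ((fun x => ((Matrix.isHermitian_conjTranspose_mul_self X).eigenvectorUnitary : Matrix (Fin N) (Fin N) ℝ) x j) ⬝ᵥ u) ^ 2 = u ⬝ᵥ u := by
  set hC := Matrix.isHermitian_conjTranspose_mul_self X
  set V : Matrix (Fin N) (Fin N) ℝ := (hC.eigenvectorUnitary : Matrix (Fin N) (Fin N) ℝ) with hV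
  have h1 : V * Vᴴ = 1 := by
    rw [← Matrix.star_eq_conjTranspose]
    exact Matrix.mem_unitaryGroup_iff.mp hC.eigenvectorUnitary.2
  have h2 : u ⬝ᵥ u = (u ᵥ* V) ⬝ᵥ (u ᵥ* V) := by
    conv_lhs => rw [show u ⬝ᵥ u = u ⬝ᵥ ((1 : Matrix (Fin N) (Fin N) ℝ) *ᵥ u) by rw [Matrix.one_mulVec],
      ← h1, ← Matrix.mulVec_mulVec, Matrix.dotProduct_mulVec u V]
    congr 1
    ext j
    simp [Matrix.mulVec, Matrix.vecMul, Matrix.conjTranspose_apply, dotProduct, mul_comm]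
  rw [h2]
  simp only [dotProduct, Matrix.vecMul]
  refine Finset.sum_congr rfl fun j _ => ?_
  rw [show (∑ x, u x * V x j) = ∑ x, V x j * u x from Finset.sum_congr rfl fun x _ => mul_comm _ _]
  ring

lemma colnorm (j : Fin N) :
    (fun x => ((Matrix.isHermitian_conjTranspose_mul_self X).eigenvectorUnitary : Matrix (Fin N) (Fin N) ℝ) x j) ⬝ᵥ
      (fun x => ((Matrix.isHermitian_conjTranspose_mul_self X).eigenvectorUnitary : Matrix (Fin N) (Fin N) ℝ) x j) = 1 := by
  set hC := Matrix.isHermitian_conjTranspose_mul_self X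
  set V : Matrix (Fin N) (Fin N) ℝ := (hC.eigenvectorUnitary : Matrix (Fin N) (Fin N) ℝ) with hV
  have h1 : Vᴴ * V = 1 := by
    rw [← Matrix.star_eq_conjTranspose]
    exact Matrix.mem_unitaryGroup_iff'.mp hC.eigenvectorUnitary.2
  have h2 := congrFun (congrFun h1 j) j
  simp only [Matrix.mul_apply, Matrix.conjTranspose_apply, Matrix.one_apply_eq, star_trivial] at h2
  simpa [dotProduct] using h2

end quad

lemma kyfan {K N : ℕ} (X : Matrix (Fin K) (Fin N) ℝ) (r : ℕ) {ι : Type*} [Fintype ι]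
    [DecidableEq ι]
    (hcard : Fintype.card ι ≤ r) (w : ι → Fin N → ℝ) (d : ι → ℝ) (hd : ∀ i, d i ≤ 1)
    (hw : ∀ i j, w i ⬝ᵥ w j = if i = j then d i else 0) :
    ∑ i, (w i) ⬝ᵥ ((Xᴴ * X) *ᵥ (w i)) ≤ ∑ i ∈ Finset.range r, sValSq X i := by
  set hC := Matrix.isHermitian_conjTranspose_mul_self X with hhC
  set V : Matrix (Fin N) (Fin N) ℝ := (hC.eigenvectorUnitary : Matrix (Fin N) (Fin N) ℝ) with hV
  set e : Fin N → ℝ := hC.eigenvalues with he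
  set c : Fin N → ℝ := fun j => ∑ i, ((fun x => V x j) ⬝ᵥ w i) ^ 2 with hcdef
  have hLHS : ∑ i, (w i) ⬝ᵥ ((Xᴴ * X) *ᵥ (w i)) = ∑ j, e j * c j := by
    rw [Finset.sum_congr rfl fun i _ => quadform X (w i)]
    rw [Finset.sum_comm]
    refine Finset.sum_congr rfl fun j _ => ?_
    rw [hcdef, Finset.mul_sum]
  have hc0 : ∀ j, 0 ≤ c j := fun j => Finset.sum_nonneg fun i _ => sq_nonneg _
  have hc1 : ∀ j, c j ≤ 1 := by
    intro j
    have := bessel w d hd hw (fun x => V x j)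
    rwa [colnorm X j] at this
  have hsumc : ∑ j, c j ≤ (Fintype.card ι : ℝ) := by
    rw [hcdef, Finset.sum_comm]
    have h1 : ∀ i : ι, ∑ j, ((fun x => V x j) ⬝ᵥ w i) ^ 2 = d i := by
      intro i
      rw [parseval_s11 X (w i), hw i i, if_pos rfl]
    rw [Finset.sum_congr rfl fun i _ => h1 i]
    calc ∑ i, d i ≤ ∑ _i : ι, (1:ℝ) := Finset.sum_le_sum fun i _ => hd i
      _ = (Fintype.card ι : ℝ) := by simp
  have hsumcN : ∑ j, c j ≤ (N : ℝ) := by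
    calc ∑ j, c j ≤ ∑ _j : Fin N, (1:ℝ) := Finset.sum_le_sum fun j _ => hc1 j
      _ = (N : ℝ) := by simp
  set σ : Equiv.Perm (Fin N) := Tuple.sort (fun j => -e j) with hσ
  set ν : Fin N → ℝ := fun j => e (σ j) with hν
  have hanti : Antitone ν := by
    intro a b hab
    have h2 := Tuple.monotone_sort (fun j => -e j) hab
    simp only [Function.comp_apply] at h2
    simp only [hν]
    linarith [h2]
  have hν0 : ∀ j, 0 ≤ ν j := fun j => Matrix.eigenvalues_conjTranspose_mul_self_nonneg X _
  have hr'N : min r N ≤ N := min_le_right _ _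
  have hsumσ : ∑ j, c (σ j) = ∑ j, c j := Equiv.sum_comp σ c
  have hcomb := comb hr'N ν (fun j => c (σ j)) hanti hν0 (fun j => hc0 _) (fun j => hc1 _)
    (by
      rw [hsumσ]
      rw [Nat.cast_min]
      exact le_min (le_trans hsumc (by exact_mod_cast Nat.cast_le.mpr hcard)) hsumcN)
  have hLHS2 : ∑ j, ν j * c (σ j) = ∑ j, e j * c j := Equiv.sum_comp σ (fun j => e j * c j)
  have hfin : ∑ i : Fin (min r N), ν (Fin.castLE hr'N i) = ∑ i ∈ Finset.range (min r N), sValSq X i := by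
    rw [← Fin.sum_univ_eq_sum_range (fun i => sValSq X i) (min r N)]
    refine Finset.sum_congr rfl fun i _ => ?_
    have hiN : (i : ℕ) < N := lt_of_lt_of_le i.2 hr'N
    show ν (Fin.castLE hr'N i) = sValSq X (i : ℕ)
    simp only [sValSq, hiN, dif_pos]
    rfl
  have hmono : ∑ i ∈ Finset.range (min r N), sValSq X i ≤ ∑ i ∈ Finset.range r, sValSq X i :=
    Finset.sum_le_sum_of_subset_of_nonneg
      (Finset.range_subset_range.2 (min_le_left _ _)) (fun i _ _ => sValSq_nonneg X i)
  rw [hLHS]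
  rw [← hLHS2]
  calc ∑ j, ν j * c (σ j) ≤ ∑ i : Fin (min r N), ν (Fin.castLE hr'N i) := hcomb
    _ = ∑ i ∈ Finset.range (min r N), sValSq X i := hfin
    _ ≤ ∑ i ∈ Finset.range r, sValSq X i := hmono

lemma frobSq_nonneg {m n : ℕ} (A : Matrix (Fin m) (Fin n) ℝ) : 0 ≤ frobSq A :=
  Finset.sum_nonneg fun _ _ => Finset.sum_nonneg fun _ _ => sq_nonneg _

lemma quad_le_sqrt_frob {M : ℕ} (E : Matrix (Fin M) (Fin M) ℝ) (u : Fin M → ℝ)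
    (hu : u ⬝ᵥ u = 1) : u ⬝ᵥ (E *ᵥ u) ≤ Real.sqrt (frobSq E) := by
  have h1 : (u ⬝ᵥ (E *ᵥ u)) ^ 2 ≤ (∑ x, u x ^ 2) * (∑ x, (E *ᵥ u) x ^ 2) := by
    have h := Finset.sum_mul_sq_le_sq_mul_sq Finset.univ u (E *ᵥ u)
    exact h
  have h2 : ∑ x, u x ^ 2 = 1 := by
    rw [← hu]; simp [dotProduct, sq]
  have h3 : ∀ x, (E *ᵥ u) x ^ 2 ≤ (∑ y, E x y ^ 2) := by
    intro x
    have h := Finset.sum_mul_sq_le_sq_mul_sq Finset.univ (fun y => E x y) u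
    have h2' : ∑ y, u y ^ 2 = 1 := h2
    calc (E *ᵥ u) x ^ 2 = (∑ y, E x y * u y) ^ 2 := by rfl
      _ ≤ (∑ y, E x y ^ 2) * ∑ y, u y ^ 2 := h
      _ = ∑ y, E x y ^ 2 := by rw [h2']; ring
  have h4 : ∑ x, (E *ᵥ u) x ^ 2 ≤ frobSq E := Finset.sum_le_sum fun x _ => h3 x
  have h5 : (u ⬝ᵥ (E *ᵥ u)) ^ 2 ≤ frobSq E := by
    calc (u ⬝ᵥ (E *ᵥ u)) ^ 2 ≤ (∑ x, u x ^ 2) * (∑ x, (E *ᵥ u) x ^ 2) := h1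
      _ = ∑ x, (E *ᵥ u) x ^ 2 := by rw [h2]; ring
      _ ≤ frobSq E := h4
  calc u ⬝ᵥ (E *ᵥ u) ≤ |u ⬝ᵥ (E *ᵥ u)| := le_abs_self _
    _ = Real.sqrt ((u ⬝ᵥ (E *ᵥ u)) ^ 2) := (Real.sqrt_sq_eq_abs _).symm
    _ ≤ Real.sqrt (frobSq E) := Real.sqrt_le_sqrt h5

lemma dot_tmul {a b : ℕ} (B : Matrix (Fin a) (Fin b) ℝ) (v w : Fin b → ℝ) :
    v ⬝ᵥ ((Bᵀ * B) *ᵥ w) = (B *ᵥ v) ⬝ᵥ (B *ᵥ w) := by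
  rw [← Matrix.mulVec_mulVec, Matrix.dotProduct_mulVec, Matrix.vecMul_transpose]

end helpers

theorem stmt_11 {m n k : ℕ} (A : Matrix (Fin m) (Fin n) ℝ)
    (r : ℕ) (hrk : r ≤ k)
    (U : Matrix (Fin m) (Fin k) ℝ) (hU : Uᵀ * U = 1)
    -- the columns of `U` are the top-`k` left singular vectors of `A`
    (hUeig : A * Aᵀ * U = U * Matrix.diagonal (fun j : Fin k => sValSq A j))
    (S : Matrix (Fin k) (Fin m) ℝ) (hS : S * Sᵀ = 1)
    (ε : ℝ) (hε : frobSq (U * Uᵀ - Sᵀ * S) < ε) :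
    ((frobSq A - ∑ i ∈ Finset.range r, (sVal (S * A) i) ^ 2) -
        (frobSq A - ∑ i ∈ Finset.range r, (sVal A i) ^ 2) ≤
      Real.sqrt (frobSq (U * Uᵀ - Sᵀ * S)) * frobSq A) ∧
    (1 ≤ Real.sqrt (frobSq (U * Uᵀ - Sᵀ * S)) →
      (frobSq A - ∑ i ∈ Finset.range r, (sVal (S * A) i) ^ 2) -
          (frobSq A - ∑ i ∈ Finset.range r, (sVal A i) ^ 2) ≤
        frobSq (U * Uᵀ - Sᵀ * S) * frobSq A) := by
  have hf0 : 0 ≤ frobSq (U * Uᵀ - Sᵀ * S) := frobSq_nonneg _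
  have ha0 : 0 ≤ frobSq A := frobSq_nonneg A
  -- remove the sqrt from sVal
  have hsv : ∀ {p q : ℕ} (X : Matrix (Fin p) (Fin q) ℝ) (i : ℕ), (sVal X i) ^ 2 = sValSq X i :=
    fun X i => Real.sq_sqrt (sValSq_nonneg X i)
  have core : (∑ i ∈ Finset.range r, sValSq A i) - (∑ i ∈ Finset.range r, sValSq (S * A) i) ≤
      Real.sqrt (frobSq (U * Uᵀ - Sᵀ * S)) * frobSq A := by
    -- the columns of U
    set u : Fin k → Fin m → ℝ := fun i x => U x i with hu
    set lam : Fin k → ℝ := fun i => sValSq A i with hlam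
    have hlam0 : ∀ i, 0 ≤ lam i := fun i => sValSq_nonneg A _
    have hudot : ∀ i j, u i ⬝ᵥ u j = if i = j then 1 else 0 := by
      intro i j
      have h := congrFun (congrFun hU i) j
      simp only [Matrix.mul_apply, Matrix.transpose_apply, Matrix.one_apply] at h
      simpa [dotProduct, hu] using h
    have heig : ∀ i, (A * Aᵀ) *ᵥ u i = lam i • u i := by
      intro i
      funext x
      have h := congrFun (congrFun hUeig x) i
      rw [Matrix.mul_apply, Matrix.mul_apply] at h
      simp only [Matrix.diagonal_apply, mul_ite, mul_zero, Finset.sum_ite_eq',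
        Finset.mem_univ, if_true] at h
      show ((A * Aᵀ) *ᵥ u i) x = lam i * u i x
      rw [show ((A * Aᵀ) *ᵥ u i) x = ∑ y, (A * Aᵀ) x y * U y i from rfl, h]
      simp [hu, hlam, mul_comm]
    -- basic dot product identities
    have hAAt : ∀ (v w' : Fin m → ℝ), v ⬝ᵥ ((A * Aᵀ) *ᵥ w') = (Aᵀ *ᵥ v) ⬝ᵥ (Aᵀ *ᵥ w') := by
      intro v w'
      rw [← Matrix.mulVec_mulVec, Matrix.dotProduct_mulVec, ← Matrix.mulVec_transpose]
    have hcross : ∀ i j, (Aᵀ *ᵥ u i) ⬝ᵥ (Aᵀ *ᵥ u j) = if i = j then lam i else 0 := by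
      intro i j
      rw [← hAAt, heig j, dotProduct_smul, smul_eq_mul, hudot i j]
      by_cases hij : i = j <;> simp [hij]
    have hlamdot : ∀ i, (Aᵀ *ᵥ u i) ⬝ᵥ (Aᵀ *ᵥ u i) = lam i := by
      intro i; rw [hcross i i, if_pos rfl]
    -- the sketched family
    set ci : Fin r → Fin k := Fin.castLE hrk with hci
    set w : Fin r → Fin n → ℝ := fun i => (Real.sqrt (lam (ci i)))⁻¹ • (Aᵀ *ᵥ u (ci i)) with hwdef
    set d : Fin r → ℝ := fun i => if lam (ci i) = 0 then 0 else 1 with hddef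
    have hd1 : ∀ i, d i ≤ 1 := by
      intro i; rw [hddef]; dsimp only; split <;> norm_num
    have hgram : ∀ i j, w i ⬝ᵥ w j = if i = j then d i else 0 := by
      intro i j
      rw [hwdef]
      dsimp only
      rw [smul_dotProduct, dotProduct_smul, hcross]
      by_cases hij : i = j
      · subst hij
        simp only [if_pos rfl, hddef]
        by_cases hz : lam (ci i) = 0
        · simp [hz]
        · have hpos : 0 < lam (ci i) := lt_of_le_of_ne (hlam0 _) (Ne.symm hz)
          have hsne : Real.sqrt (lam (ci i)) ≠ 0 := by positivity
          have hsq : Real.sqrt (lam (ci i)) * Real.sqrt (lam (ci i)) = lam (ci i) :=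
            Real.mul_self_sqrt (hlam0 _)
          simp only [hz, if_false, smul_eq_mul]
          field_simp
          simp [Real.sq_sqrt (hlam0 (ci i))]
      · have hcij : ci i ≠ ci j := by
          intro h
          exact hij (Fin.castLE_injective hrk h)
        simp [hij, hcij]
    have hcard : Fintype.card (Fin r) ≤ r := by simp
    have hkf := kyfan (S * A) r hcard w d hd1 hgram
    -- identify the quadratic forms for S * A
    have hSAconj : (S * A)ᴴ = (S * A)ᵀ := by
      ext i j; simp [Matrix.conjTranspose_apply]
    have hquad : ∀ i : Fin r, w i ⬝ᵥ (((S * A)ᴴ * (S * A)) *ᵥ w i)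
        = lam (ci i) * ((S *ᵥ u (ci i)) ⬝ᵥ (S *ᵥ u (ci i))) := by
      intro i
      rw [hSAconj]
      by_cases hz : lam (ci i) = 0
      · have hy : Aᵀ *ᵥ u (ci i) = 0 := by
          have h := hlamdot (ci i)
          rw [hz] at h
          exact dotProduct_self_eq_zero.mp h
        rw [hwdef]
        dsimp only
        rw [hy, hz]
        simp
      · have hy1 : A *ᵥ (Aᵀ *ᵥ u (ci i)) = lam (ci i) • u (ci i) := by
          rw [Matrix.mulVec_mulVec]; exact heig _
        have hM : ((S * A)ᵀ * (S * A)) *ᵥ (Aᵀ *ᵥ u (ci i))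
            = lam (ci i) • (Aᵀ *ᵥ (Sᵀ *ᵥ (S *ᵥ u (ci i)))) := by
          rw [Matrix.transpose_mul, Matrix.mul_assoc]
          rw [← Matrix.mulVec_mulVec]
          rw [show (Sᵀ * (S * A)) *ᵥ (Aᵀ *ᵥ u (ci i))
              = Sᵀ *ᵥ (S *ᵥ (A *ᵥ (Aᵀ *ᵥ u (ci i)))) by
            rw [← Matrix.mulVec_mulVec, ← Matrix.mulVec_mulVec]]
          rw [hy1, Matrix.mulVec_smul, Matrix.mulVec_smul, Matrix.mulVec_smul]
        have hydot : (Aᵀ *ᵥ u (ci i)) ⬝ᵥ (Aᵀ *ᵥ (Sᵀ *ᵥ (S *ᵥ u (ci i))))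
            = lam (ci i) * ((S *ᵥ u (ci i)) ⬝ᵥ (S *ᵥ u (ci i))) := by
          rw [Matrix.dotProduct_mulVec, Matrix.vecMul_transpose, hy1,
            smul_dotProduct, smul_eq_mul]
          congr 1
          rw [Matrix.dotProduct_mulVec, Matrix.vecMul_transpose]
        rw [hwdef]
        dsimp only
        rw [smul_dotProduct, Matrix.mulVec_smul, dotProduct_smul, hM,
          dotProduct_smul, hydot]
        have hpos : 0 < lam (ci i) := lt_of_le_of_ne (hlam0 _) (Ne.symm hz)
        have hsne : Real.sqrt (lam (ci i)) ≠ 0 := by positivity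
        have hsq : Real.sqrt (lam (ci i)) * Real.sqrt (lam (ci i)) = lam (ci i) :=
          Real.mul_self_sqrt (hlam0 _)
        simp only [smul_eq_mul]
        field_simp
        rw [Real.sq_sqrt (hlam0 _)]
    have hkey1 : ∑ i : Fin r, lam (ci i) * ((S *ᵥ u (ci i)) ⬝ᵥ (S *ᵥ u (ci i)))
        ≤ ∑ i ∈ Finset.range r, sValSq (S * A) i := by
      rw [← Finset.sum_congr rfl fun i _ => hquad i]
      exact hkf
    -- the A side
    have hAeq : ∑ i ∈ Finset.range r, sValSq A i = ∑ i : Fin r, lam (ci i) := by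
      rw [← Fin.sum_univ_eq_sum_range (fun i => sValSq A i) r]
      exact Finset.sum_congr rfl fun i _ => rfl
    -- 1 - ‖S u‖² as quadratic form in E
    have hunit : ∀ i : Fin k, u i ⬝ᵥ u i = 1 := by
      intro i; rw [hudot i i, if_pos rfl]
    have h1q : ∀ i : Fin k, u i ⬝ᵥ ((U * Uᵀ - Sᵀ * S) *ᵥ u i)
        = 1 - (S *ᵥ u i) ⬝ᵥ (S *ᵥ u i) := by
      intro i
      rw [Matrix.sub_mulVec, dotProduct_sub]
      congr 1
      · have hUt : (U * Uᵀ) = (Uᵀ)ᵀ * Uᵀ := by rw [Matrix.transpose_transpose]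
        rw [hUt, dot_tmul]
        have hcol : Uᵀ *ᵥ u i = fun j => if j = i then 1 else 0 := by
          funext j
          show (Uᵀ *ᵥ u i) j = _
          rw [show (Uᵀ *ᵥ u i) j = u j ⬝ᵥ u i from rfl, hudot j i]
        rw [hcol]
        simp [dotProduct]
      · exact dot_tmul S (u i) (u i)
    have hbound : ∀ i : Fin r, lam (ci i) * (1 - (S *ᵥ u (ci i)) ⬝ᵥ (S *ᵥ u (ci i)))
        ≤ lam (ci i) * Real.sqrt (frobSq (U * Uᵀ - Sᵀ * S)) := by
      intro i
      refine mul_le_mul_of_nonneg_left ?_ (hlam0 _)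
      rw [← h1q]
      exact quad_le_sqrt_frob _ _ (hunit _)
    -- sum of top eigenvalues at most the Frobenius norm
    have hsuml : ∑ i : Fin r, lam (ci i) ≤ frobSq A := by
      have hlamcol : ∀ i : Fin k, lam i = ∑ j : Fin n, ((fun x => A x j) ⬝ᵥ u i) ^ 2 := by
        intro i
        rw [← hlamdot i]
        refine Finset.sum_congr rfl fun j _ => ?_
        rw [sq]; rfl
      have hsub : ∑ i : Fin r, lam (ci i) ≤ ∑ i : Fin k, lam i := by
        have hmap := Finset.sum_map Finset.univ ⟨ci, Fin.castLE_injective hrk⟩ lam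
        simp only [Function.Embedding.coeFn_mk] at hmap
        rw [← hmap]
        exact Finset.sum_le_sum_of_subset_of_nonneg (Finset.subset_univ _)
          (fun i _ _ => hlam0 i)
      have hall : ∑ i : Fin k, lam i ≤ frobSq A := by
        rw [Finset.sum_congr rfl fun i _ => hlamcol i, Finset.sum_comm]
        have hb : ∀ j : Fin n, ∑ i : Fin k, ((fun x => A x j) ⬝ᵥ u i) ^ 2
            ≤ (fun x => A x j) ⬝ᵥ (fun x => A x j) :=
          fun j => bessel u (fun _ => 1) (fun _ => le_refl 1) hudot (fun x => A x j)
        calc ∑ j : Fin n, ∑ i : Fin k, ((fun x => A x j) ⬝ᵥ u i) ^ 2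
            ≤ ∑ j : Fin n, (fun x => A x j) ⬝ᵥ (fun x => A x j) := Finset.sum_le_sum fun j _ => hb j
          _ = frobSq A := by
            show (∑ j : Fin n, ∑ x : Fin m, A x j * A x j) = frobSq A
            unfold frobSq
            conv_lhs => rw [Finset.sum_comm]
            exact Finset.sum_congr rfl fun x _ => Finset.sum_congr rfl fun j _ => (sq (A x j)).symm
      exact le_trans hsub hall
    -- put everything together
    have hsf0 : 0 ≤ Real.sqrt (frobSq (U * Uᵀ - Sᵀ * S)) := Real.sqrt_nonneg _
    have hfinal : ∑ i : Fin r, lam (ci i) * (1 - (S *ᵥ u (ci i)) ⬝ᵥ (S *ᵥ u (ci i)))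
        ≤ Real.sqrt (frobSq (U * Uᵀ - Sᵀ * S)) * frobSq A := by
      calc ∑ i : Fin r, lam (ci i) * (1 - (S *ᵥ u (ci i)) ⬝ᵥ (S *ᵥ u (ci i)))
          ≤ ∑ i : Fin r, lam (ci i) * Real.sqrt (frobSq (U * Uᵀ - Sᵀ * S)) :=
            Finset.sum_le_sum fun i _ => hbound i
        _ = (∑ i : Fin r, lam (ci i)) * Real.sqrt (frobSq (U * Uᵀ - Sᵀ * S)) := by
            rw [Finset.sum_mul]
        _ ≤ frobSq A * Real.sqrt (frobSq (U * Uᵀ - Sᵀ * S)) :=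
            mul_le_mul_of_nonneg_right hsuml hsf0
        _ = Real.sqrt (frobSq (U * Uᵀ - Sᵀ * S)) * frobSq A := mul_comm _ _
    have hexpand : ∑ i : Fin r, lam (ci i) * (1 - (S *ᵥ u (ci i)) ⬝ᵥ (S *ᵥ u (ci i)))
        = (∑ i : Fin r, lam (ci i))
          - ∑ i : Fin r, lam (ci i) * ((S *ᵥ u (ci i)) ⬝ᵥ (S *ᵥ u (ci i))) := by
      rw [← Finset.sum_sub_distrib]
      exact Finset.sum_congr rfl fun i _ => by ring
    rw [hAeq]
    linarith [hkey1, hfinal, hexpand.symm.le, hexpand.le]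
  refine ⟨?_, ?_⟩
  · have hrw : (frobSq A - ∑ i ∈ Finset.range r, (sVal (S * A) i) ^ 2) -
        (frobSq A - ∑ i ∈ Finset.range r, (sVal A i) ^ 2)
        = (∑ i ∈ Finset.range r, sValSq A i) - (∑ i ∈ Finset.range r, sValSq (S * A) i) := by
      simp only [hsv]; ring
    rw [hrw]; exact core
  · intro h1
    have hrw : (frobSq A - ∑ i ∈ Finset.range r, (sVal (S * A) i) ^ 2) -
        (frobSq A - ∑ i ∈ Finset.range r, (sVal A i) ^ 2)
        = (∑ i ∈ Finset.range r, sValSq A i) - (∑ i ∈ Finset.range r, sValSq (S * A) i) := by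
      simp only [hsv]; ring
    rw [hrw]
    refine le_trans core (mul_le_mul_of_nonneg_right ?_ ha0)
    nlinarith [Real.sq_sqrt hf0, Real.sqrt_nonneg (frobSq (U * Uᵀ - Sᵀ * S))]
end

section
/- Let A_1, …, A_{D'} ∈ ℝ^{m×n}, let A_{(1)} = [A_1 | ⋯ | A_{D'}] ∈ ℝ^{m×(nD')} be their horizontal concatenation, and let S ∈ ℝ^{k×m} have orthonormal rows, with r ≤ k. Then ∑_{d=1}^{D'} (‖A_d‖_F² − ∑_{i=1}^r σ_i(S A_d)²) ≤ ∑_d ‖A_d‖_F² − ∑_{i=1}^r σ_i(S A_{(1)})². (This is the key relaxation inequality in Theorem 1 of the paper, bounding the total SCW-type error by the tensor-based loss.) -/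
open Matrix BigOperators Finset

namespace StmtAux

lemma frobSq_eq_trace {a b : ℕ} (B : Matrix (Fin a) (Fin b) ℝ) :
    frobSq B = Matrix.trace (Bᵀ * B) := by
  unfold frobSq Matrix.trace
  rw [Finset.sum_comm]
  simp [Matrix.mul_apply, Matrix.diag, sq]

lemma frobSq_nonneg {a b : ℕ} (B : Matrix (Fin a) (Fin b) ℝ) : 0 ≤ frobSq B :=
  Finset.sum_nonneg fun _ _ => Finset.sum_nonneg fun _ _ => sq_nonneg _

/-- trace of a product of two symmetric idempotents is nonnegative -/
lemma trace_mul_nonneg_of_projs {a : ℕ} (P Q : Matrix (Fin a) (Fin a) ℝ)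
    (hPs : Pᵀ = P) (hPi : P * P = P) (hQs : Qᵀ = Q) (hQi : Q * Q = Q) :
    0 ≤ Matrix.trace (P * Q) := by
  have h1 : frobSq (P * Q) = Matrix.trace (P * Q) := by
    rw [frobSq_eq_trace]
    have : (P * Q)ᵀ * (P * Q) = Q * P * Q := by
      rw [Matrix.transpose_mul, hPs, hQs]
      rw [Matrix.mul_assoc, ← Matrix.mul_assoc P P Q, hPi, ← Matrix.mul_assoc]
    rw [this, Matrix.trace_mul_cycle, hQi, Matrix.trace_mul_comm]
  rw [← h1]; exact frobSq_nonneg _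

lemma frobSq_mul_unitary {a b : ℕ} (B : Matrix (Fin a) (Fin b) ℝ)
    (U : Matrix (Fin b) (Fin b) ℝ) (hU : U * Uᵀ = 1) :
    frobSq (B * U) = frobSq B := by
  rw [frobSq_eq_trace, frobSq_eq_trace, Matrix.transpose_mul]
  rw [Matrix.mul_assoc, Matrix.trace_mul_comm, Matrix.mul_assoc, Matrix.mul_assoc, hU, Matrix.mul_one]




variable {k N : ℕ}

noncomputable def eigU (X : Matrix (Fin k) (Fin N) ℝ) : Matrix (Fin N) (Fin N) ℝ :=
  ((Matrix.isHermitian_conjTranspose_mul_self X).eigenvectorUnitary : Matrix (Fin N) (Fin N) ℝ)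

noncomputable def muv (X : Matrix (Fin k) (Fin N) ℝ) : Fin N → ℝ :=
  (Matrix.isHermitian_conjTranspose_mul_self X).eigenvalues

lemma muv_nonneg (X : Matrix (Fin k) (Fin N) ℝ) (j : Fin N) : 0 ≤ muv X j :=
  (Matrix.posSemidef_conjTranspose_mul_self X).eigenvalues_nonneg j

lemma eigU_mul_transpose (X : Matrix (Fin k) (Fin N) ℝ) : eigU X * (eigU X)ᵀ = 1 := by
  have := Unitary.coe_mul_star_self (Matrix.isHermitian_conjTranspose_mul_self X).eigenvectorUnitary
  rw [← this]; congr 1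

lemma transpose_mul_eigU (X : Matrix (Fin k) (Fin N) ℝ) : (eigU X)ᵀ * eigU X = 1 := by
  have := Unitary.coe_star_mul_self (Matrix.isHermitian_conjTranspose_mul_self X).eigenvectorUnitary
  rw [← this]; congr 1

lemma gram (X : Matrix (Fin k) (Fin N) ℝ) :
    (X * eigU X)ᵀ * (X * eigU X) = diagonal (muv X) := by
  have hspec : Xᵀ * X = eigU X * diagonal (muv X) * (eigU X)ᵀ := by
    have := (Matrix.isHermitian_conjTranspose_mul_self X).spectral_theorem
    simpa [eigU, muv, Matrix.star_eq_conjTranspose, Matrix.conjTranspose_eq_transpose_of_trivial] using this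
  rw [Matrix.transpose_mul, Matrix.mul_assoc, ← Matrix.mul_assoc Xᵀ X (eigU X), hspec]
  rw [Matrix.mul_assoc, Matrix.mul_assoc, transpose_mul_eigU, Matrix.mul_one,
    ← Matrix.mul_assoc, transpose_mul_eigU, Matrix.one_mul]

lemma sValSq_eq_muv (X : Matrix (Fin k) (Fin N) ℝ) (i : ℕ) (h : i < N) :
    sValSq X i = muv X (Tuple.sort (fun j => -muv X j) ⟨i, h⟩) := by
  simp only [sValSq, muv, dif_pos h]

lemma sValSq_eq_zero (X : Matrix (Fin k) (Fin N) ℝ) (i : ℕ) (h : ¬ i < N) :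
    sValSq X i = 0 := by
  simp only [sValSq, dif_neg h]

lemma sValSq_nonneg (X : Matrix (Fin k) (Fin N) ℝ) (i : ℕ) : 0 ≤ sValSq X i := by
  by_cases h : i < N
  · rw [sValSq_eq_muv X i h]; exact muv_nonneg _ _
  · rw [sValSq_eq_zero X i h]

/-- the sorted values decrease -/
lemma muv_sort_anti (X : Matrix (Fin k) (Fin N) ℝ) (i j : Fin N) (hij : i ≤ j) :
    muv X (Tuple.sort (fun j => -muv X j) j) ≤ muv X (Tuple.sort (fun j => -muv X j) i) := by
  have := Tuple.monotone_sort (fun j => -muv X j) hij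
  simpa using this




lemma sum_range_eq_filter (f : Fin N → ℝ) (t : ℕ) (htN : t ≤ N) (g : ℕ → ℝ)
    (hg : ∀ (i : ℕ) (h : i < N), g i = f ⟨i, h⟩) :
    ∑ i ∈ Finset.range t, g i = ∑ i ∈ Finset.univ.filter (fun i : Fin N => (i : ℕ) < t), f i := by
  refine Finset.sum_bij' (fun (a : ℕ) (ha : a ∈ Finset.range t) =>
      (⟨a, lt_of_lt_of_le (Finset.mem_range.mp ha) htN⟩ : Fin N))
    (fun (b : Fin N) (_ : b ∈ Finset.univ.filter (fun i : Fin N => (i : ℕ) < t)) => (b : ℕ))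
    ?_ ?_ ?_ ?_ ?_
  · intro a ha; simp [Finset.mem_range.mp ha]
  · intro b hb; simp only [Finset.mem_filter] at hb; simpa using hb.2
  · intro a ha; rfl
  · intro b hb; rfl
  · intro a ha; exact hg a _

lemma comb_core (m d : Fin N → ℝ) (t : ℕ) (htN : t ≤ N)
    (hmono : ∀ i j : Fin N, i ≤ j → m j ≤ m i)
    (hm0 : ∀ j, 0 ≤ m j) (hd0 : ∀ j, 0 ≤ d j) (hd1 : ∀ j, d j ≤ 1)
    (hds : ∑ j, d j ≤ (t : ℝ)) :
    ∑ i : Fin N, m i * d i ≤ ∑ i ∈ Finset.univ.filter (fun i : Fin N => (i : ℕ) < t), m i := by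
  set T := Finset.univ.filter (fun i : Fin N => (i : ℕ) < t) with hTdef
  set T' := Finset.univ.filter (fun i : Fin N => ¬ (i : ℕ) < t) with hT'def
  have hθ : ∃ θ : ℝ, 0 ≤ θ ∧ (∀ i ∈ T, θ ≤ m i) ∧ (∀ i ∈ T', m i ≤ θ) := by
    by_cases ht : t < N
    · refine ⟨m ⟨t, ht⟩, hm0 _, ?_, ?_⟩
      · intro i hi
        simp only [hTdef, Finset.mem_filter] at hi
        exact hmono i ⟨t, ht⟩ (by exact Fin.mk_le_of_le_val (le_of_lt hi.2))
      · intro i hi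
        simp only [hT'def, Finset.mem_filter] at hi
        exact hmono ⟨t, ht⟩ i (by exact Fin.mk_le_of_le_val (le_of_not_gt hi.2))
    · refine ⟨0, le_refl _, fun i _ => hm0 i, fun i hi => ?_⟩
      exfalso
      simp only [hT'def, Finset.mem_filter] at hi
      exact hi.2 (lt_of_lt_of_le i.isLt (le_of_not_gt ht))
  obtain ⟨θ, hθ0, hθT, hθT'⟩ := hθ
  have hcardT : ∑ i ∈ T, (1 : ℝ) = t := by
    rw [← sum_range_eq_filter (fun _ => (1:ℝ)) t htN (fun _ => (1:ℝ)) (fun _ _ => rfl)]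
    simp
  have hsplit : ∑ i ∈ T, m i * d i + ∑ i ∈ T', m i * d i = ∑ i : Fin N, m i * d i :=
    Finset.sum_filter_add_sum_filter_not _ _ _
  have hsplitd : ∑ i ∈ T, d i + ∑ i ∈ T', d i = ∑ i : Fin N, d i :=
    Finset.sum_filter_add_sum_filter_not _ _ _
  have h1 : ∑ i ∈ T', m i * d i ≤ θ * ∑ i ∈ T', d i := by
    rw [Finset.mul_sum]
    exact Finset.sum_le_sum fun i hi => mul_le_mul_of_nonneg_right (hθT' i hi) (hd0 i)
  have h2 : θ * ∑ i ∈ T, (1 - d i) ≤ ∑ i ∈ T, m i * (1 - d i) := by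
    rw [Finset.mul_sum]
    exact Finset.sum_le_sum fun i hi =>
      mul_le_mul_of_nonneg_right (hθT i hi) (by linarith [hd1 i])
  have h3 : ∑ i ∈ T, m i * d i + ∑ i ∈ T, m i * (1 - d i) = ∑ i ∈ T, m i := by
    rw [← Finset.sum_add_distrib]
    exact Finset.sum_congr rfl fun i _ => by ring
  have h4 : ∑ i ∈ T, (1 - d i) = (t : ℝ) - ∑ i ∈ T, d i := by
    rw [Finset.sum_sub_distrib, hcardT]
  have h5 : θ * ∑ i ∈ T', d i ≤ θ * ((t : ℝ) - ∑ i ∈ T, d i) := by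
    apply mul_le_mul_of_nonneg_left _ hθ0
    linarith [hsplitd, hds]
  rw [h4] at h2
  linarith [h1, h2, h3, h5, hsplit]


lemma sum_range_sValSq_min (X : Matrix (Fin k) (Fin N) ℝ) (r : ℕ) :
    ∑ i ∈ Finset.range r, sValSq X i = ∑ i ∈ Finset.range (min r N), sValSq X i := by
  refine (Finset.sum_subset (Finset.range_subset_range.mpr (min_le_left r N)) ?_).symm
  intro x hx hx'
  apply sValSq_eq_zero
  intro hxN
  exact hx' (Finset.mem_range.mpr (lt_min (Finset.mem_range.mp hx) hxN))

lemma sum_muv_mul_le (X : Matrix (Fin k) (Fin N) ℝ) (c : Fin N → ℝ)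
    (hc0 : ∀ j, 0 ≤ c j) (hc1 : ∀ j, c j ≤ 1) (r : ℕ) (hcs : ∑ j, c j ≤ (r : ℝ)) :
    ∑ j, muv X j * c j ≤ ∑ i ∈ Finset.range r, sValSq X i := by
  set π := Tuple.sort (fun j => -muv X j) with hπ
  have h1 : ∑ j, muv X j * c j = ∑ i : Fin N, muv X (π i) * c (π i) :=
    (Equiv.sum_comp π (fun j => muv X j * c j)).symm
  have hcn : ∑ j, c j ≤ (N : ℝ) := by
    calc ∑ j, c j ≤ ∑ _j : Fin N, (1 : ℝ) := Finset.sum_le_sum fun j _ => hc1 j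
    _ = N := by simp
  have hds : ∑ i : Fin N, c (π i) ≤ ((min r N : ℕ) : ℝ) := by
    rw [Equiv.sum_comp π c]
    rw [Nat.cast_min]
    exact le_min hcs hcn
  have h2 := comb_core (fun i => muv X (π i)) (fun i => c (π i)) (min r N) (min_le_right r N)
    (fun i j hij => muv_sort_anti X i j hij) (fun j => muv_nonneg X _)
    (fun j => hc0 _) (fun j => hc1 _) hds
  have h3 : ∑ i ∈ Finset.univ.filter (fun i : Fin N => (i : ℕ) < min r N), muv X (π i)
      = ∑ i ∈ Finset.range (min r N), sValSq X i := by
    refine (sum_range_eq_filter (fun i => muv X (π i)) (min r N) (min_le_right r N)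
      (sValSq X) ?_).symm
    intro i h
    exact sValSq_eq_muv X i h
  rw [sum_range_sValSq_min X r, h1, ← h3]
  exact h2

lemma proj_transpose_mul_self {a : ℕ} {P : Matrix (Fin a) (Fin a) ℝ}
    (hPs : Pᵀ = P) (hPi : P * P = P) {b : ℕ} (Y : Matrix (Fin a) (Fin b) ℝ) :
    (P * Y)ᵀ * (P * Y) = Yᵀ * (P * Y) := by
  rw [Matrix.transpose_mul, Matrix.mul_assoc, ← Matrix.mul_assoc Pᵀ P Y, hPs, hPi]

lemma one_sub_proj_symm {a : ℕ} {P : Matrix (Fin a) (Fin a) ℝ}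
    (hPs : Pᵀ = P) : (1 - P)ᵀ = 1 - P := by
  rw [Matrix.transpose_sub, Matrix.transpose_one, hPs]

lemma one_sub_proj_idem {a : ℕ} {P : Matrix (Fin a) (Fin a) ℝ}
    (hPi : P * P = P) : (1 - P) * (1 - P) = 1 - P := by
  rw [Matrix.mul_sub, Matrix.sub_mul, Matrix.sub_mul, hPi]
  simp only [Matrix.one_mul, Matrix.mul_one]
  abel

lemma keyA (X : Matrix (Fin k) (Fin N) ℝ) (P : Matrix (Fin k) (Fin k) ℝ)
    (hPs : Pᵀ = P) (hPi : P * P = P) (r : ℕ) (hPt : Matrix.trace P ≤ (r : ℝ)) :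
    frobSq (P * X) ≤ ∑ i ∈ Finset.range r, sValSq X i := by
  set Y := X * eigU X with hY
  have hYg : Yᵀ * Y = diagonal (muv X) := gram X
  set s : Fin N → ℝ := fun j => (Yᵀ * (P * Y)) j j with hs
  have hscol : ∀ j, s j = ∑ i, ((P * Y) i j) ^ 2 := by
    intro j
    have h := congrFun (congrFun (proj_transpose_mul_self hPs hPi Y) j) j
    have h2 : s j = ((P * Y)ᵀ * (P * Y)) j j := h.symm
    rw [h2]
    simp [Matrix.mul_apply, Matrix.transpose_apply, sq, mul_comm]
  have hs0 : ∀ j, 0 ≤ s j := fun j => by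
    rw [hscol j]; exact Finset.sum_nonneg fun i _ => sq_nonneg _
  have hfrob : frobSq (P * X) = ∑ j, s j := by
    have h1 : frobSq (P * X) = frobSq (P * Y) := by
      rw [hY, ← Matrix.mul_assoc]
      exact (frobSq_mul_unitary (P * X) (eigU X) (eigU_mul_transpose X)).symm
    rw [h1, frobSq_eq_trace, proj_transpose_mul_self hPs hPi Y]
    rfl
  have hsμ : ∀ j, s j ≤ muv X j := by
    intro j
    set Z : Matrix (Fin k) (Fin N) ℝ := (1 - P) * Y with hZ
    have hQs : (1 - P)ᵀ = (1 - P) := one_sub_proj_symm hPs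
    have hQi : (1 - P) * (1 - P) = (1 - P) := one_sub_proj_idem hPi
    have h1 : Zᵀ * Z = Yᵀ * Y - Yᵀ * (P * Y) := by
      rw [hZ, proj_transpose_mul_self hQs hQi Y, Matrix.sub_mul, Matrix.one_mul,
        Matrix.mul_sub]
    have h2 : 0 ≤ (Zᵀ * Z) j j := by
      rw [Matrix.mul_apply]
      exact Finset.sum_nonneg fun i _ => by
        simp only [Matrix.transpose_apply]; exact mul_self_nonneg _
    rw [h1] at h2
    have h3 : (Yᵀ * Y) j j = muv X j := by rw [hYg]; simp
    simp only [Matrix.sub_apply] at h2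
    rw [h3] at h2
    have h4 : s j = (Yᵀ * (P * Y)) j j := rfl
    linarith [h2]
  set c : Fin N → ℝ := fun j => if muv X j = 0 then 0 else s j / muv X j with hc
  have hμ0 := muv_nonneg X
  have hczero : ∀ j, muv X j = 0 → s j = 0 := by
    intro j h
    have := hsμ j
    rw [h] at this
    linarith [hs0 j]
  have hsc : ∀ j, s j = muv X j * c j := by
    intro j
    simp only [hc]
    by_cases h : muv X j = 0
    · rw [if_pos h, hczero j h, h, mul_zero]
    · rw [if_neg h]
      field_simp
  have hc0 : ∀ j, 0 ≤ c j := by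
    intro j
    simp only [hc]
    by_cases h : muv X j = 0
    · rw [if_pos h]
    · rw [if_neg h]
      exact div_nonneg (hs0 j) (hμ0 j)
  have hc1 : ∀ j, c j ≤ 1 := by
    intro j
    simp only [hc]
    by_cases h : muv X j = 0
    · rw [if_pos h]; norm_num
    · rw [if_neg h]
      rw [div_le_one (lt_of_le_of_ne (hμ0 j) (Ne.symm h))]
      exact hsμ j
  -- sum of c bounded by trace P
  have hcsum : ∑ j, c j ≤ Matrix.trace P := by
    set d : Fin N → ℝ := fun j => if muv X j = 0 then 0 else (Real.sqrt (muv X j))⁻¹ with hd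
    set Uu : Matrix (Fin k) (Fin N) ℝ := Y * diagonal d with hUu
    set e : Fin N → ℝ := fun j => if muv X j = 0 then 0 else 1 with he
    have hd2 : ∀ j, d j * muv X j * d j = e j := by
      intro j
      by_cases h : muv X j = 0
      · simp [hd, he, h]
      · simp only [hd, he]
        rw [if_neg h, if_neg h]
        have hpos : 0 < muv X j := lt_of_le_of_ne (hμ0 j) (Ne.symm h)
        have hsq : Real.sqrt (muv X j) * Real.sqrt (muv X j) = muv X j :=
          Real.mul_self_sqrt (hμ0 j)
        have hsqne : Real.sqrt (muv X j) ≠ 0 := ne_of_gt (Real.sqrt_pos.mpr hpos)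
        field_simp
        exact (Real.sq_sqrt (hμ0 j)).symm
    have hde : ∀ j, d j * e j = d j := by
      intro j
      simp only [hd, he]
      by_cases h : muv X j = 0
      · rw [if_pos h, if_pos h, mul_zero]
      · rw [if_neg h, if_neg h, mul_one]
    have hUU : Uuᵀ * Uu = diagonal e := by
      have h1 : Uuᵀ * Uu = diagonal d * (Yᵀ * Y) * diagonal d := by
        rw [hUu, Matrix.transpose_mul, Matrix.diagonal_transpose]
        simp only [Matrix.mul_assoc]
      rw [h1, hYg, Matrix.diagonal_mul_diagonal, Matrix.diagonal_mul_diagonal]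
      exact congrArg diagonal (funext hd2)
    have hUE : Uu * diagonal e = Uu := by
      rw [hUu, Matrix.mul_assoc, Matrix.diagonal_mul_diagonal]
      have h6 : (fun j => d j * e j) = d := funext hde
      rw [h6]
    set Q2 : Matrix (Fin k) (Fin k) ℝ := Uu * Uuᵀ with hQ2
    have hQ2s : Q2ᵀ = Q2 := by
      rw [hQ2, Matrix.transpose_mul, Matrix.transpose_transpose]
    have hQ2i : Q2 * Q2 = Q2 := by
      rw [hQ2, Matrix.mul_assoc Uu Uuᵀ (Uu * Uuᵀ), ← Matrix.mul_assoc Uuᵀ Uu Uuᵀ, hUU,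
        ← Matrix.mul_assoc Uu (diagonal e) Uuᵀ, hUE]
    have hsumtr : ∑ j, c j = Matrix.trace (P * Q2) := by
      have e1 : Matrix.trace (P * Q2) = Matrix.trace (Uuᵀ * (P * Uu)) := by
        rw [hQ2, ← Matrix.mul_assoc, Matrix.trace_mul_cycle, Matrix.mul_assoc]
      have e2 : Uuᵀ * (P * Uu) = diagonal d * (Yᵀ * (P * Y)) * diagonal d := by
        rw [hUu, Matrix.transpose_mul, Matrix.diagonal_transpose]
        simp only [Matrix.mul_assoc]
      have e3 : ∀ j, (diagonal d * (Yᵀ * (P * Y)) * diagonal d) j j = c j := by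
        intro j
        rw [Matrix.mul_diagonal, Matrix.diagonal_mul]
        have h4 : (Yᵀ * (P * Y)) j j = s j := rfl
        rw [h4]
        simp only [hc, hd]
        by_cases h : muv X j = 0
        · rw [if_pos h, if_pos h, hczero j h]
          ring
        · rw [if_neg h, if_neg h]
          have hpos : 0 < muv X j := lt_of_le_of_ne (hμ0 j) (Ne.symm h)
          have hsq : Real.sqrt (muv X j) * Real.sqrt (muv X j) = muv X j :=
            Real.mul_self_sqrt (hμ0 j)
          have hsqne : Real.sqrt (muv X j) ≠ 0 := ne_of_gt (Real.sqrt_pos.mpr hpos)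
          rw [eq_div_iff (ne_of_gt hpos)]
          calc (Real.sqrt (muv X j))⁻¹ * s j * (Real.sqrt (muv X j))⁻¹ * muv X j
              = s j * (muv X j / (Real.sqrt (muv X j) * Real.sqrt (muv X j))) := by
                field_simp
            _ = s j := by rw [hsq]; field_simp
      rw [e1, e2]
      unfold Matrix.trace
      simp only [Matrix.diag]
      exact (Finset.sum_congr rfl fun j _ => (e3 j)).symm
    have htr2 : Matrix.trace (P * Q2) ≤ Matrix.trace P := by
      have h0 : 0 ≤ Matrix.trace (P * (1 - Q2)) :=
        trace_mul_nonneg_of_projs P (1 - Q2) hPs hPi (one_sub_proj_symm hQ2s)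
          (one_sub_proj_idem hQ2i)
      have h5 : Matrix.trace (P * (1 - Q2)) = Matrix.trace P - Matrix.trace (P * Q2) := by
        rw [Matrix.mul_sub, Matrix.mul_one, Matrix.trace_sub]
      linarith [h0, h5 ▸ h0]
    rw [hsumtr]
    exact htr2
  -- conclude
  rw [hfrob]
  calc ∑ j, s j = ∑ j, muv X j * c j := Finset.sum_congr rfl fun j _ => hsc j
    _ ≤ ∑ i ∈ Finset.range r, sValSq X i :=
        sum_muv_mul_le X c hc0 hc1 r (le_trans hcsum hPt)

lemma outer_transpose {a : ℕ} (u v : Fin a → ℝ) :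
    (Matrix.vecMulVec u v)ᵀ = Matrix.vecMulVec v u := by
  ext i j
  simp [Matrix.vecMulVec_apply, mul_comm]

lemma outer_mul_outer {a : ℕ} (u v w z : Fin a → ℝ) :
    Matrix.vecMulVec u v * Matrix.vecMulVec w z
      = (∑ l, v l * w l) • Matrix.vecMulVec u z := by
  ext i j
  simp only [Matrix.mul_apply, Matrix.vecMulVec_apply, Matrix.smul_apply, smul_eq_mul]
  rw [Finset.sum_mul]
  exact Finset.sum_congr rfl fun l _ => by ring

lemma trace_outer {a : ℕ} (u v : Fin a → ℝ) :
    Matrix.trace (Matrix.vecMulVec u v) = ∑ i, u i * v i := by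
  unfold Matrix.trace
  simp [Matrix.diag, Matrix.vecMulVec_apply]

lemma keyB (X : Matrix (Fin k) (Fin N) ℝ) (r : ℕ) :
    ∃ P : Matrix (Fin k) (Fin k) ℝ, Pᵀ = P ∧ P * P = P ∧ Matrix.trace P ≤ (r : ℝ) ∧
      ∑ i ∈ Finset.range r, sValSq X i ≤ frobSq (P * X) := by
  set Y := X * eigU X with hY
  have hYg : Yᵀ * Y = diagonal (muv X) := gram X
  have hdot : ∀ a b : Fin N, (∑ i, Y i a * Y i b) = if a = b then muv X a else 0 := by
    intro a b
    have h := congrFun (congrFun hYg a) b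
    simp only [Matrix.mul_apply, Matrix.transpose_apply] at h
    rw [h, Matrix.diagonal_apply]
  set π := Tuple.sort (fun j => -muv X j) with hπ
  set t := min r N with ht
  set T : Finset (Fin N) :=
    Finset.univ.filter (fun i : Fin N => (i : ℕ) < t ∧ muv X (π i) ≠ 0) with hT
  set G : Finset (Fin N) := T.image π with hG
  have hGne : ∀ j ∈ G, muv X j ≠ 0 := by
    intro j hj
    rw [hG, Finset.mem_image] at hj
    obtain ⟨i, hi, rfl⟩ := hj
    rw [hT, Finset.mem_filter] at hi
    exact hi.2.2
  set W : Fin N → Matrix (Fin k) (Fin k) ℝ :=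
    fun j => (muv X j)⁻¹ • Matrix.vecMulVec (fun i => Y i j) (fun i => Y i j) with hW
  set P : Matrix (Fin k) (Fin k) ℝ := ∑ j ∈ G, W j with hP
  have hPs : Pᵀ = P := by
    rw [hP, Matrix.transpose_sum]
    refine Finset.sum_congr rfl fun j _ => ?_
    rw [hW, Matrix.transpose_smul, outer_transpose]
  have hWmul : ∀ j ∈ G, ∀ j' ∈ G, W j * W j' = if j = j' then W j else 0 := by
    intro j hj j' hj'
    rw [hW]
    simp only [Matrix.smul_mul, Matrix.mul_smul, outer_mul_outer, hdot j j']
    by_cases h : j = j'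
    · subst h
      rw [if_pos rfl, if_pos rfl, smul_smul, smul_smul]
      congr 1
      have := hGne j hj
      field_simp
    · rw [if_neg h, if_neg h, zero_smul, smul_zero, smul_zero]
  have hPi : P * P = P := by
    rw [hP, Finset.sum_mul_sum]
    calc ∑ j ∈ G, ∑ j' ∈ G, W j * W j'
        = ∑ j ∈ G, ∑ j' ∈ G, (if j = j' then W j else 0) := by
          refine Finset.sum_congr rfl fun j hj => Finset.sum_congr rfl fun j' hj' => ?_
          exact hWmul j hj j' hj'
      _ = ∑ j ∈ G, W j := by
          refine Finset.sum_congr rfl fun j hj => ?_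
          rw [Finset.sum_ite_eq G j (fun _ => W j), if_pos hj]
  have hcardT : (T.card : ℝ) ≤ (r : ℝ) := by
    have h1 : T ⊆ Finset.univ.filter (fun i : Fin N => (i : ℕ) < t) := by
      intro x hx
      rw [hT, Finset.mem_filter] at hx
      rw [Finset.mem_filter]
      exact ⟨hx.1, hx.2.1⟩
    have h2 : (Finset.univ.filter (fun i : Fin N => (i : ℕ) < t)).card = t := by
      have h3 := sum_range_eq_filter (fun _ : Fin N => (1:ℝ)) t (min_le_right r N)
        (fun _ => (1:ℝ)) (fun _ _ => rfl)
      simp only [Finset.sum_const, nsmul_eq_mul, mul_one] at h3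
      have h4 : (((Finset.univ.filter (fun i : Fin N => (i : ℕ) < t)).card : ℝ)) = (t : ℝ) := by
        simpa using h3.symm
      exact_mod_cast h4
    have h4 : T.card ≤ t := h2 ▸ Finset.card_le_card h1
    have h5 : t ≤ r := min_le_left r N
    exact_mod_cast le_trans h4 h5
  have hPt : Matrix.trace P ≤ (r : ℝ) := by
    rw [hP, Matrix.trace_sum]
    have h1 : ∀ j ∈ G, Matrix.trace (W j) = 1 := by
      intro j hj
      rw [hW, Matrix.trace_smul, trace_outer, hdot j j, if_pos rfl, smul_eq_mul]
      field_simp [hGne j hj]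
    rw [Finset.sum_congr rfl h1, Finset.sum_const, nsmul_eq_mul, mul_one]
    have hcardG : G.card ≤ T.card := by rw [hG]; exact Finset.card_image_le
    calc (G.card : ℝ) ≤ (T.card : ℝ) := by exact_mod_cast hcardG
      _ ≤ (r : ℝ) := hcardT
  -- the columns in G are fixed by P
  have hPY : ∀ j ∈ G, ∀ i, (P * Y) i j = Y i j := by
    intro j hj i
    rw [hP, Matrix.sum_mul, Matrix.sum_apply]
    have h1 : ∀ j' ∈ G, (W j' * Y) i j
        = (if j' = j then Y i j else 0) := by
      intro j' hj'
      rw [hW, Matrix.smul_mul, Matrix.smul_apply, Matrix.mul_apply]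
      have h2 : ∀ l, Matrix.vecMulVec (fun i => Y i j') (fun i => Y i j') i l * Y l j
          = Y i j' * (Y l j' * Y l j) := by
        intro l
        rw [Matrix.vecMulVec_apply]
        ring
      rw [Finset.sum_congr rfl fun l _ => h2 l, ← Finset.mul_sum, hdot j' j]
      by_cases h : j' = j
      · subst h
        rw [if_pos rfl, if_pos rfl, smul_eq_mul]
        have := hGne j' hj'
        field_simp
      · rw [if_neg h, if_neg h, mul_zero, smul_zero]
    rw [Finset.sum_congr rfl h1, Finset.sum_ite_eq' G j (fun _ => Y i j), if_pos hj]
  have hfroblow : ∑ j ∈ G, muv X j ≤ frobSq (P * X) := by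
    have h1 : frobSq (P * X) = frobSq (P * Y) := by
      rw [hY, ← Matrix.mul_assoc]
      exact (frobSq_mul_unitary (P * X) (eigU X) (eigU_mul_transpose X)).symm
    have h2 : frobSq (P * Y) = ∑ j : Fin N, ∑ i, ((P * Y) i j) ^ 2 := by
      unfold frobSq
      exact Finset.sum_comm
    have h3 : ∑ j ∈ G, muv X j = ∑ j ∈ G, ∑ i, ((P * Y) i j) ^ 2 := by
      refine Finset.sum_congr rfl fun j hj => ?_
      have h4 : ∀ i, ((P * Y) i j) ^ 2 = Y i j * Y i j := by
        intro i
        rw [hPY j hj i, sq]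
      rw [Finset.sum_congr rfl fun i _ => h4 i, hdot j j, if_pos rfl]
    rw [h1, h2, h3]
    refine Finset.sum_le_sum_of_subset_of_nonneg (Finset.subset_univ G) ?_
    intro j _ _
    exact Finset.sum_nonneg fun i _ => sq_nonneg _
  refine ⟨P, hPs, hPi, hPt, ?_⟩
  have hsum : ∑ i ∈ Finset.range r, sValSq X i = ∑ j ∈ G, muv X j := by
    rw [sum_range_sValSq_min X r]
    have h1 : ∑ i ∈ Finset.range (min r N), sValSq X i
        = ∑ i ∈ Finset.univ.filter (fun i : Fin N => (i : ℕ) < t), muv X (π i) := by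
      exact sum_range_eq_filter (fun i => muv X (π i)) (min r N) (min_le_right r N)
        (sValSq X) (fun i h => sValSq_eq_muv X i h)
    have h2 : ∑ i ∈ Finset.univ.filter (fun i : Fin N => (i : ℕ) < t), muv X (π i)
        = ∑ i ∈ T, muv X (π i) := by
      refine (Finset.sum_subset ?_ ?_).symm
      · intro x hx
        rw [hT, Finset.mem_filter] at hx
        rw [Finset.mem_filter]
        exact ⟨hx.1, hx.2.1⟩
      · intro x hx hx'
        rw [Finset.mem_filter] at hx
        rw [hT, Finset.mem_filter] at hx'
        by_contra hne
        exact hx' ⟨hx.1, hx.2, hne⟩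
    have h3 : ∑ i ∈ T, muv X (π i) = ∑ j ∈ G, muv X j := by
      rw [hG]
      exact (Finset.sum_image fun x _ y _ hxy => π.injective hxy).symm
    rw [h1, h2, h3]
  rw [hsum]
  exact hfroblow

end StmtAux

theorem stmt_14 {m n k D : ℕ} (A : Fin D → Matrix (Fin m) (Fin n) ℝ)
    (Acat : Matrix (Fin m) (Fin (D * n)) ℝ)
    (hAcat : ∀ (i : Fin m) (j : Fin (D * n)),
      Acat i j = A (finProdFinEquiv.symm j).1 i (finProdFinEquiv.symm j).2)
    (S : Matrix (Fin k) (Fin m) ℝ) (hS : S * Sᵀ = 1)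
    (r : ℕ) (hr : 1 ≤ r) (hrk : r ≤ k) :
    ∑ d, (frobSq (A d) - ∑ i ∈ Finset.range r, (sVal (S * A d) i) ^ 2) ≤
      (∑ d, frobSq (A d)) - ∑ i ∈ Finset.range r, (sVal (S * Acat) i) ^ 2 := by
  obtain ⟨P, hPs, hPi, hPt, hlow⟩ := StmtAux.keyB (S * Acat) r
  have hcat : frobSq (P * (S * Acat)) = ∑ d, frobSq (P * (S * A d)) := by
    have h1 : ∀ (i : Fin k) (p : Fin D × Fin n),
        ((P * S) * Acat) i (finProdFinEquiv p) = ((P * S) * A p.1) i p.2 := by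
      intro i p
      rw [Matrix.mul_apply, Matrix.mul_apply]
      refine Finset.sum_congr rfl fun l _ => ?_
      rw [hAcat l (finProdFinEquiv p), Equiv.symm_apply_apply]
    calc frobSq (P * (S * Acat))
        = ∑ i, ∑ j : Fin (D * n), (((P * S) * Acat) i j) ^ 2 := by
          rw [← Matrix.mul_assoc]; rfl
      _ = ∑ i, ∑ p : Fin D × Fin n, (((P * S) * Acat) i (finProdFinEquiv p)) ^ 2 := by
          refine Finset.sum_congr rfl fun i _ => ?_
          exact (Equiv.sum_comp finProdFinEquiv
            (fun j => (((P * S) * Acat) i j) ^ 2)).symm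
      _ = ∑ i, ∑ d, ∑ j2 : Fin n, (((P * S) * A d) i j2) ^ 2 := by
          refine Finset.sum_congr rfl fun i _ => ?_
          rw [Fintype.sum_prod_type]
          exact Finset.sum_congr rfl fun d _ => Finset.sum_congr rfl fun j2 _ => by
            rw [h1 i (d, j2)]
      _ = ∑ d, frobSq (P * (S * A d)) := by
          rw [Finset.sum_comm]
          refine Finset.sum_congr rfl fun d _ => ?_
          rw [← Matrix.mul_assoc]; rfl
  have hA : ∀ d, frobSq (P * (S * A d)) ≤ ∑ i ∈ Finset.range r, sValSq (S * A d) i :=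
    fun d => StmtAux.keyA (S * A d) P hPs hPi r hPt
  have hkey : ∑ i ∈ Finset.range r, sValSq (S * Acat) i
      ≤ ∑ d, ∑ i ∈ Finset.range r, sValSq (S * A d) i := by
    refine le_trans hlow ?_
    rw [hcat]
    exact Finset.sum_le_sum fun d _ => hA d
  have e1 : ∀ d, ∑ i ∈ Finset.range r, (sVal (S * A d) i) ^ 2
      = ∑ i ∈ Finset.range r, sValSq (S * A d) i := fun d =>
    Finset.sum_congr rfl fun i _ => Real.sq_sqrt (StmtAux.sValSq_nonneg _ i)
  have e2 : ∑ i ∈ Finset.range r, (sVal (S * Acat) i) ^ 2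
      = ∑ i ∈ Finset.range r, sValSq (S * Acat) i :=
    Finset.sum_congr rfl fun i _ => Real.sq_sqrt (StmtAux.sValSq_nonneg _ i)
  rw [e2]
  simp only [e1]
  rw [Finset.sum_sub_distrib]
  linarith [hkey]
end
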